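/- arXiv:math/0510293 — 2 statements merged into one kernel-verified Lean document; each statement's English description precedes it below -/
import Mathlib

section
/- For a prime ℓ and an integer a with a not divisible by ℓ, the trace from ℚ(ζ_ℓ) to ℚ of ζ_ℓ^a/(ζ_ℓ - 1) equals (ℓ+1)/2 - [a]_ℓ, where [a]_ℓ ∈ {0, ..., ℓ-1} is the residue of a modulo ℓ. -/
/-!
Since `ℓ` is prime, the minimal polynomial of every primitive `ℓ`-th root of unity is
`1 + X + ⋯ + X ^ (ℓ - 1)`, so each of them has trace `-1`, while `Tr 1 = ℓ - 1`. Writing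
`r = [a]_ℓ`, we have `ζ ^ a / (ζ - 1) = (1 + ζ + ⋯ + ζ ^ (r - 1)) + 1 / (ζ - 1)`; the geometric sum
has trace `ℓ - r`. For the last term, the automorphism `ζ ↦ ζ⁻¹` gives
`Tr (1 / (ζ - 1)) = Tr (1 / (ζ⁻¹ - 1))`, and these two elements add up to `-1`, so
`Tr (1 / (ζ - 1)) = (1 - ℓ) / 2`.
-/

open Polynomial Algebra

theorem zpow_eq_zpow_emod₀ {G₀ : Type*} [GroupWithZero G₀] {x : G₀} (m : ℤ) {n : ℕ}
    (h : x ^ n = 1) : x ^ m = x ^ (m % n) := by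
  obtain rfl | hn := eq_or_ne n 0
  · simp
  lift x to G₀ˣ using IsUnit.of_pow_eq_one h hn
  rw [← Units.val_zpow_eq_zpow_val, ← Units.val_zpow_eq_zpow_val,
    zpow_eq_zpow_emod' m (Units.val_eq_one.1 (by simpa using h))]

theorem Polynomial.nextCoeff_cyclotomic_prime (R : Type*) [Ring R] [Nontrivial R] {p : ℕ}
    (hp : p.Prime) : (cyclotomic p R).nextCoeff = 1 := by
  have := Fact.mk hp
  have := hp.pos
  have hdeg : (cyclotomic p R).natDegree = p - 1 := by
    rw [natDegree_cyclotomic, Nat.totient_prime hp]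
  rw [nextCoeff_of_natDegree_pos (by rw [hdeg]; exact Nat.sub_pos_of_lt hp.one_lt), hdeg,
    cyclotomic_prime, finsetSum_coeff]
  simp only [coeff_X_pow, Finset.sum_ite_eq, Finset.mem_range]
  exact if_pos (by omega)

section Cyclotomic

variable {K L : Type*} [Field K] [Field L] [Algebra K L] {n p : ℕ} {ζ η : L}

theorem IsPrimitiveRoot.exists_algEquiv_apply_eq [NeZero n] [IsCyclotomicExtension {n} K L]
    (hirr : Irreducible (cyclotomic n K)) (hζ : IsPrimitiveRoot ζ n) (hη : IsPrimitiveRoot η n) :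
    ∃ σ : L ≃ₐ[K] L, σ ζ = η := by
  have := IsCyclotomicExtension.neZero' n K L
  refine ⟨(hζ.powerBasis K).equivOfMinpoly (hη.powerBasis K) ?_, ?_⟩
  · rw [hζ.powerBasis_gen K, hη.powerBasis_gen K, ← hζ.minpoly_eq_cyclotomic_of_irreducible hirr,
      ← hη.minpoly_eq_cyclotomic_of_irreducible hirr]
  · simpa using (hζ.powerBasis K).equivOfMinpoly_gen (hη.powerBasis K) _

section Prime

variable [IsCyclotomicExtension {p} K L] (hp : p.Prime) (hirr : Irreducible (cyclotomic p K))
include hp hirr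

theorem IsCyclotomicExtension.trace_one_of_prime : trace K L 1 = p - 1 := by
  have := Fact.mk hp
  rw [← map_one (algebraMap K L), trace_algebraMap, IsCyclotomicExtension.finrank L hirr,
    Nat.totient_prime hp, nsmul_eq_mul, mul_one, Nat.cast_pred hp.pos]

theorem IsPrimitiveRoot.trace_eq_neg_one (hζ : IsPrimitiveRoot ζ p) : trace K L ζ = -1 := by
  have := Fact.mk hp
  have := IsCyclotomicExtension.neZero' p K L
  rw [← hζ.powerBasis_gen K, PowerBasis.trace_gen_eq_nextCoeff_minpoly, hζ.powerBasis_gen K,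
    ← hζ.minpoly_eq_cyclotomic_of_irreducible hirr, nextCoeff_cyclotomic_prime K hp]

theorem IsPrimitiveRoot.trace_geom_sum (hζ : IsPrimitiveRoot ζ p) {r : ℕ} (hr : 0 < r)
    (hrp : r ≤ p) : trace K L (∑ k ∈ Finset.range r, ζ ^ k) = p - r := by
  obtain ⟨s, rfl⟩ := Nat.exists_eq_add_one_of_ne_zero hr.ne'
  have hpow (k : ℕ) (hk : k < s) : trace K L (ζ ^ (k + 1)) = -1 :=
    (hζ.pow_of_coprime _ ((hp.coprime_iff_not_dvd.2
      (Nat.not_dvd_of_pos_of_lt k.succ_pos (by omega))).symm)).trace_eq_neg_one hp hirr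
  rw [map_sum, Finset.sum_range_succ',
    Finset.sum_congr rfl fun k hk => hpow k (Finset.mem_range.1 hk), pow_zero,
    IsCyclotomicExtension.trace_one_of_prime hp hirr]
  simp only [Finset.sum_neg_distrib, Finset.sum_const, Finset.card_range, nsmul_eq_mul, mul_one]
  push_cast
  ring

theorem IsPrimitiveRoot.two_mul_trace_inv_sub_one (hζ : IsPrimitiveRoot ζ p) :
    2 * trace K L (ζ - 1)⁻¹ = 1 - p := by
  have := Fact.mk hp
  obtain ⟨σ, hσ⟩ := hζ.exists_algEquiv_apply_eq hirr hζ.inv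
  have hconj : trace K L (ζ - 1)⁻¹ = trace K L (ζ⁻¹ - 1)⁻¹ := by
    rw [← trace_eq_of_algEquiv σ, map_inv₀, map_sub, map_one, hσ]
  have hsum : (ζ - 1)⁻¹ + (ζ⁻¹ - 1)⁻¹ = -1 := by
    have h0 := hζ.ne_zero hp.ne_zero
    have h1 : ζ - 1 ≠ 0 := sub_ne_zero.2 (hζ.ne_one hp.one_lt)
    have h2 : 1 - ζ ≠ 0 := sub_ne_zero.2 (hζ.ne_one hp.one_lt).symm
    field_simp
    ring
  rw [two_mul]
  nth_rw 2 [hconj]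
  rw [← map_add, hsum, map_neg, IsCyclotomicExtension.trace_one_of_prime hp hirr]
  ring

theorem IsPrimitiveRoot.two_mul_trace_pow_div_sub_one (hζ : IsPrimitiveRoot ζ p) {r : ℕ}
    (hr : 0 < r) (hrp : r ≤ p) : 2 * trace K L (ζ ^ r / (ζ - 1)) = p + 1 - 2 * r := by
  have hsplit : ζ ^ r / (ζ - 1) = ∑ k ∈ Finset.range r, ζ ^ k + (ζ - 1)⁻¹ := by
    rw [geom_sum_eq (hζ.ne_one hp.one_lt)]
    ring
  rw [hsplit, map_add, mul_add, hζ.trace_geom_sum hp hirr hr hrp,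
    hζ.two_mul_trace_inv_sub_one hp hirr]
  ring

end Prime

end Cyclotomic

/-- For a prime `ℓ` and an integer `a` with `ℓ ∤ a`, the trace from `ℚ(ζ_ℓ)` to `ℚ` of
`ζ_ℓ^a/(ζ_ℓ - 1)` equals `(ℓ+1)/2 - [a]_ℓ`, where `[a]_ℓ = a % ℓ ∈ {0,…,ℓ-1}`. -/
theorem trace_zeta_pow_div_zeta_sub_one (ℓ : ℕ) (hℓ : ℓ.Prime)
    (K : Type*) [Field K] [Algebra ℚ K]
    [IsCyclotomicExtension {ℓ} ℚ K]
    (ζ : K) (hζ : IsPrimitiveRoot ζ ℓ)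
    (a : ℤ) (ha : ¬ (ℓ : ℤ) ∣ a) :
    Algebra.trace ℚ K (ζ ^ a / (ζ - 1)) =
      ((ℓ : ℚ) + 1) / 2 - ((a % (ℓ : ℤ) : ℤ) : ℚ) := by
  obtain ⟨r, hr⟩ : ∃ r : ℕ, a % ℓ = r :=
    Int.eq_ofNat_of_zero_le (Int.emod_nonneg a (by exact_mod_cast hℓ.ne_zero))
  have hr0 : 0 < r := by
    have : a % ℓ ≠ 0 := fun h => ha (Int.dvd_of_emod_eq_zero h)
    omega
  have hrℓ : r ≤ ℓ := by
    have := Int.emod_lt_of_pos a (by exact_mod_cast hℓ.pos : (0 : ℤ) < ℓ)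
    omega
  have key := hζ.two_mul_trace_pow_div_sub_one hℓ (cyclotomic.irreducible_rat hℓ.pos) hr0 hrℓ
  rw [zpow_eq_zpow_emod₀ a hζ.pow_eq_one, hr, zpow_natCast, Int.cast_natCast]
  linarith
end

section
/- Let ℓ ≥ 5 be a prime, p ≠ ℓ a prime, ζ_ℓ a primitive ℓ-th root of unity, and let b = [1 - p^{m-1}]_ℓ where m is the order of p mod ℓ, with b ≥ 3. Then the trace from ℚ(ζ_ℓ) to ℚ of (ζ_ℓ^{p+1} + ζ_ℓ^{p-1})/(ζ_ℓ^p - 1)² equals -b² + b(ℓ+2) - (ℓ² + 6ℓ + 5)/6. -/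
/-!
Put `η = ζ^p`, again a primitive `ℓ`-th root of unity. Since `p⁻¹ ≡ p^(m-1) ≡ 1 - b (mod ℓ)`,
the numerator is `η^b + η^(2-b)`. In `ℚ(ζ)` one has the explicit inverse
`(η - 1)⁻² = (2ℓ)⁻¹ ∑_{i<ℓ} i(ℓ-2-i) η^i`, and `Tr(η^k)` is `ℓ - 1` or `-1` according as
`ℓ ∣ k` or not, so the trace of `η^c/(η - 1)²` is the single weight `r(ℓ-2-r)/2` at `r ≡ -c`,
minus the average of all weights. Both `c = b` and `c = 2 - b` give the weight `(b-2)(ℓ-b)/2`.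
-/

open Finset Polynomial

section ArithmeticGeometricSums

variable {R : Type*} [CommRing R]

theorem sub_one_mul_sum_range_natCast_mul_pow (x : R) (n : ℕ) :
    (x - 1) * ∑ i ∈ range n, (i : R) * x ^ i = n * x ^ n - x * ∑ i ∈ range n, x ^ i := by
  induction n with
  | zero => simp
  | succ n ih =>
    rw [sum_range_succ, sum_range_succ, mul_add, ih]
    push_cast
    ring

theorem sub_one_mul_sum_range_natCast_sq_mul_pow (x : R) (n : ℕ) :
    (x - 1) * ∑ i ∈ range n, (i : R) ^ 2 * x ^ i =
      n ^ 2 * x ^ n - x * (2 * ∑ i ∈ range n, (i : R) * x ^ i + ∑ i ∈ range n, x ^ i) := by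
  induction n with
  | zero => simp
  | succ n ih =>
    rw [sum_range_succ, sum_range_succ, sum_range_succ, mul_add, ih]
    push_cast
    ring

theorem sub_one_sq_mul_sum_range_eq {x : R} {n : ℕ} (hx : x ^ n = 1)
    (hsum : ∑ i ∈ range n, x ^ i = 0) :
    (x - 1) ^ 2 * ∑ i ∈ range n, (i : R) * (n - 2 - i) * x ^ i = 2 * n := by
  have hT := sub_one_mul_sum_range_natCast_mul_pow x n
  have hQ := sub_one_mul_sum_range_natCast_sq_mul_pow x n
  have hW : ∑ i ∈ range n, (i : R) * (n - 2 - i) * x ^ i =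
      (n - 2) * ∑ i ∈ range n, (i : R) * x ^ i - ∑ i ∈ range n, (i : R) ^ 2 * x ^ i := by
    rw [mul_sum, ← sum_sub_distrib]
    exact sum_congr rfl fun i _ => by ring
  rw [hx, hsum] at hT hQ
  rw [hW]
  linear_combination ((x - 1) * (n - 2) + 2 * x) * hT - (x - 1) * hQ

end ArithmeticGeometricSums

theorem sum_range_natCast_mul_sub (n : ℕ) (t : ℚ) :
    ∑ i ∈ range n, (i : ℚ) * (t - i) = n * (n - 1) * (3 * t - 2 * n + 1) / 6 := by
  induction n with
  | zero => simp
  | succ n ih =>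
    rw [sum_range_succ, ih]
    push_cast
    ring

theorem IsPrimitiveRoot.pow_eq_pow_of_natCast_eq {M : Type*} [CommMonoid M] {ζ : M} {k : ℕ}
    [NeZero k] (hζ : IsPrimitiveRoot ζ k) {x y : ℕ} (h : (x : ZMod k) = y) : ζ ^ x = ζ ^ y :=
  (hζ.isOfFinOrder (NeZero.ne k)).pow_eq_pow_iff_modEq.mpr
    (hζ.eq_orderOf ▸ (ZMod.natCast_eq_natCast_iff x y k).mp h)

theorem IsPrimitiveRoot.pow_div_sub_one_sq_eq_sum {ℓ : ℕ} {K : Type*} [Field K] [Algebra ℚ K]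
    {η : K} (hη : IsPrimitiveRoot η ℓ) (hℓ : 1 < ℓ) (c : ℕ) :
    η ^ c / (η - 1) ^ 2 =
      ∑ i ∈ range ℓ, ((i : ℚ) * (ℓ - 2 - i) / (2 * ℓ)) • η ^ (c + i) := by
  have : CharZero K := charZero_of_injective_algebraMap (algebraMap ℚ K).injective
  have hℓK : (ℓ : K) ≠ 0 := Nat.cast_ne_zero.mpr (by omega)
  have hη1 : (η - 1) ^ 2 ≠ 0 := pow_ne_zero 2 (sub_ne_zero.mpr (hη.ne_one hℓ))
  have hinv := sub_one_sq_mul_sum_range_eq hη.pow_eq_one (hη.geom_sum_eq_zero hℓ)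
  have hsum : ∑ i ∈ range ℓ, ((i : ℚ) * (ℓ - 2 - i) / (2 * ℓ)) • η ^ (c + i) =
      η ^ c / (2 * ℓ) * ∑ i ∈ range ℓ, (i : K) * (ℓ - 2 - i) * η ^ i := by
    rw [mul_sum]
    refine sum_congr rfl fun i _ => ?_
    rw [Algebra.smul_def, eq_ratCast, pow_add]
    push_cast
    ring
  rw [div_eq_iff hη1, hsum, mul_assoc, mul_comm _ ((η - 1) ^ 2), hinv]
  field_simp

namespace IsPrimitiveRoot

variable {ℓ : ℕ} [hℓ : Fact ℓ.Prime] {K : Type*} [Field K] [Algebra ℚ K]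
  [IsCyclotomicExtension {ℓ} ℚ K] {η : K}

theorem trace_eq_neg_one_s4 (hη : IsPrimitiveRoot η ℓ) : Algebra.trace ℚ K η = -1 := by
  have hℓ2 := hℓ.out.two_le
  have hdeg : (cyclotomic ℓ ℚ).natDegree = ℓ - 1 := by
    rw [natDegree_cyclotomic, Nat.totient_prime hℓ.out]
  have hcoeff : (cyclotomic ℓ ℚ).coeff (ℓ - 2) = 1 := by
    simp only [cyclotomic_prime, finsetSum_coeff, coeff_X_pow, sum_ite_eq, mem_range]
    exact if_pos (by omega)
  rw [← hη.powerBasis_gen ℚ, PowerBasis.trace_gen_eq_nextCoeff_minpoly, hη.powerBasis_gen ℚ,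
    ← hη.minpoly_eq_cyclotomic_of_irreducible (cyclotomic.irreducible_rat hℓ.out.pos),
    nextCoeff_of_natDegree_pos (by omega), hdeg, show ℓ - 1 - 1 = ℓ - 2 by omega, hcoeff]

theorem trace_pow (hη : IsPrimitiveRoot η ℓ) (k : ℕ) :
    Algebra.trace ℚ K (η ^ k) = (if ℓ ∣ k then (ℓ : ℚ) else 0) - 1 := by
  split_ifs with hk
  · have hfinrank : Module.finrank ℚ K = ℓ - 1 := by
      rw [IsCyclotomicExtension.finrank K (cyclotomic.irreducible_rat hℓ.out.pos),
        Nat.totient_prime hℓ.out]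
    rw [(hη.pow_eq_one_iff_dvd k).mpr hk, ← map_one (algebraMap ℚ K), Algebra.trace_algebraMap,
      hfinrank, nsmul_one, Nat.cast_sub hℓ.out.one_le, Nat.cast_one]
  · rw [zero_sub]
    exact (hη.pow_of_coprime k ((Nat.coprime_comm.mp
      ((Nat.Prime.coprime_iff_not_dvd hℓ.out).mpr hk)))).trace_eq_neg_one_s4

theorem trace_pow_div_sub_one_sq (hη : IsPrimitiveRoot η ℓ) {c r : ℕ} (hr : r < ℓ)
    (hcr : ℓ ∣ c + r) :
    Algebra.trace ℚ K (η ^ c / (η - 1) ^ 2) = r * (ℓ - 2 - r) / 2 - (ℓ - 1) * (ℓ - 5) / 12 := by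
  have hdvd : ∀ i ∈ range ℓ, ℓ ∣ c + i ↔ i = r := fun i hi => by
    refine ⟨fun h => ?_, fun h => h ▸ hcr⟩
    exact Nat.ModEq.eq_of_lt_of_lt (Nat.ModEq.add_left_cancel' c
      ((Nat.modEq_zero_iff_dvd.mpr h).trans (Nat.modEq_zero_iff_dvd.mpr hcr).symm))
      (mem_range.mp hi) hr
  rw [hη.pow_div_sub_one_sq_eq_sum hℓ.out.one_lt, map_sum]
  simp only [map_smul, hη.trace_pow, smul_eq_mul, mul_sub_one, sum_sub_distrib]
  rw [sum_congr rfl fun i hi => by rw [if_congr (hdvd i hi) rfl rfl, mul_ite, mul_zero],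
    sum_ite_eq' _ r, if_pos (mem_range.mpr hr), ← sum_div, sum_range_natCast_mul_sub]
  have : (ℓ : ℚ) ≠ 0 := Nat.cast_ne_zero.mpr hℓ.out.ne_zero
  field_simp
  ring

end IsPrimitiveRoot

theorem trace_S_eq_general (ℓ : ℕ) (hℓ : ℓ.Prime)
    (p : ℕ) (hp : p.Prime) (hpℓ : p ≠ ℓ)
    (K : Type*) [Field K] [Algebra ℚ K]
    [IsCyclotomicExtension {ℓ} ℚ K]
    (ζ : K) (hζ : IsPrimitiveRoot ζ ℓ)
    (m : ℕ) (hm : m = orderOf (p : ZMod ℓ))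
    (b : ℤ) (hb : b = (1 - (p : ℤ) ^ (m - 1)) % (ℓ : ℤ)) (hb3 : 3 ≤ b) :
    Algebra.trace ℚ K ((ζ ^ (p + 1) + ζ ^ (p - 1)) / (ζ ^ p - 1) ^ 2) =
      -(b : ℚ) ^ 2 + (b : ℚ) * ((ℓ : ℚ) + 2) - ((ℓ : ℚ) ^ 2 + 6 * (ℓ : ℚ) + 5) / 6 := by
  have := Fact.mk hℓ
  have hcop : p.Coprime ℓ := (Nat.coprime_primes hp hℓ).mpr hpℓ
  have hη : IsPrimitiveRoot (ζ ^ p) ℓ := hζ.pow_of_coprime p hcop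
  have hp_inv : (p : ZMod ℓ) * p ^ (m - 1) = 1 :=
    hm ▸ (isOfFinOrder_iff_isUnit.mpr ((ZMod.isUnit_iff_coprime p ℓ).mpr hcop)).unit.mul_inv
  obtain ⟨a, rfl⟩ := Int.eq_ofNat_of_zero_le (by omega : 0 ≤ b)
  have hal : a < ℓ := by
    have := Int.emod_lt_of_pos (1 - (p : ℤ) ^ (m - 1)) (Int.natCast_pos.mpr hℓ.pos)
    omega
  have ha : (a : ZMod ℓ) = 1 - p ^ (m - 1) := by
    simpa [ZMod.intCast_mod] using congrArg (Int.cast : ℤ → ZMod ℓ) hb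
  have hnum₁ : ζ ^ (p - 1) = (ζ ^ p) ^ a := by
    rw [← pow_mul]
    refine hζ.pow_eq_pow_of_natCast_eq ?_
    push_cast [hp.one_le, ha]
    linear_combination hp_inv
  have hnum₂ : ζ ^ (p + 1) = (ζ ^ p) ^ (ℓ + 2 - a) := by
    rw [← pow_mul]
    refine hζ.pow_eq_pow_of_natCast_eq ?_
    push_cast [show a ≤ ℓ + 2 by omega, ha, ZMod.natCast_self]
    linear_combination -hp_inv
  rw [hnum₁, hnum₂, add_div, map_add,
    hη.trace_pow_div_sub_one_sq (r := a - 2) (by omega) ⟨1, by omega⟩,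
    hη.trace_pow_div_sub_one_sq (r := ℓ - a) (by omega) ⟨1, by omega⟩]
  push_cast [show 2 ≤ a by omega, hal.le]
  ring

/-- Let `ℓ ≥ 5` be a prime, `p ≠ ℓ` a prime, `ζ` a primitive `ℓ`-th root of unity and
`b = [1 - p^(m-1)]_ℓ` where `m` is the order of `p` mod `ℓ`, with `b ≥ 3`.  Then the
trace from `ℚ(ζ)` to `ℚ` of `(ζ^(p+1) + ζ^(p-1))/(ζ^p - 1)²` equals
`-b² + b(ℓ+2) - (ℓ² + 6ℓ + 5)/6`. -/
theorem trace_S_eq (ℓ : ℕ) (hℓ : ℓ.Prime) (hℓ5 : 5 ≤ ℓ)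
    (p : ℕ) (hp : p.Prime) (hpℓ : p ≠ ℓ)
    (K : Type*) [Field K] [Algebra ℚ K]
    [IsCyclotomicExtension {ℓ} ℚ K]
    (ζ : K) (hζ : IsPrimitiveRoot ζ ℓ)
    (m : ℕ) (hm : m = orderOf (p : ZMod ℓ))
    (b : ℤ) (hb : b = (1 - (p : ℤ) ^ (m - 1)) % (ℓ : ℤ)) (hb3 : 3 ≤ b) :
    Algebra.trace ℚ K ((ζ ^ (p + 1) + ζ ^ (p - 1)) / (ζ ^ p - 1) ^ 2) =
      -(b : ℚ) ^ 2 + (b : ℚ) * ((ℓ : ℚ) + 2) - ((ℓ : ℚ) ^ 2 + 6 * (ℓ : ℚ) + 5) / 6 :=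
  trace_S_eq_general ℓ hℓ p hp hpℓ K ζ hζ m hm b hb hb3
end
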